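/- Suppose N ≥ 2 and ρ(A) < 1, and for each user i let q_i = C (I_N − A)^{-1} b_i + d_i. Then the influence score of user i, defined by Ψ_i = (1/(N−1)) · Σ_{n ≠ i} (q_i)_n, satisfies 0 ≤ Ψ_i ≤ 1. -/

import Mathlib

open Matrix Finset Filter

/-- Spectral radius of a real square matrix: the maximum of `|z|` over the
complex eigenvalues `z` (roots of the characteristic polynomial over `ℂ`). -/
noncomputable def specRad (N : ℕ) (T : Matrix (Fin N) (Fin N) ℝ) : ℝ :=
  sSup {r : ℝ | ∃ z : ℂ, ((T.map Complex.ofReal).charpoly).IsRoot z ∧ r = ‖z‖}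

/-- The propagation matrix `A`. -/
noncomputable def propA (N : ℕ) (L : Fin N → Finset (Fin N)) (lam mu : Fin N → ℝ) :
    Matrix (Fin N) (Fin N) ℝ :=
  Matrix.of fun j k => if k ∈ L j then mu k / (∑ l ∈ L j, (lam l + mu l)) else 0

/-- The vector `b_i`. -/
noncomputable def bvec (N : ℕ) (L : Fin N → Finset (Fin N)) (lam mu : Fin N → ℝ)
    (i : Fin N) : Fin N → ℝ :=
  fun j => if i ∈ L j then lam i / (∑ l ∈ L j, (lam l + mu l)) else 0

/-- The diagonal matrix `C`. -/
noncomputable def Cmat (N : ℕ) (lam mu : Fin N → ℝ) : Matrix (Fin N) (Fin N) ℝ :=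
  Matrix.diagonal fun j => mu j / (lam j + mu j)

/-- The vector `d_i`. -/
noncomputable def dvec (N : ℕ) (lam mu : Fin N → ℝ) (i : Fin N) : Fin N → ℝ :=
  fun j => if j = i then lam i / (lam i + mu i) else 0

/-!
Since `A ≥ 0` entrywise and `ρ(A) < 1`, Gelfand's formula gives `A ^ k → 0`. Hence `I - A` is
invertible and inverse-positive: if `(I - A) x ≥ 0` then `x ≥ A x ≥ A² x ≥ ⋯ ≥ Aᵏ x → 0`.
Applied to `x = (I - A)⁻¹ b_i` this gives `x ≥ 0`, and applied to `1 - x` it gives `x ≤ 1`,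
because `(I - A)(1 - x) = 1 - A 1 - b_i ≥ 0`: each row of `A` plus the entry of `b_i` sums to at
most one. For `n ≠ i` we have `(q_i)_n = C_nn x_n` with `0 ≤ C_nn ≤ 1`, so `Ψ_i` is an average of
numbers in `[0, 1]`.
-/

open Topology Polynomial

theorem tendsto_pow_atTop_nhds_zero_of_spectralRadius_lt_one {A : Type*} [NormedRing A]
    [NormedAlgebra ℂ A] [CompleteSpace A] {a : A} (h : spectralRadius ℂ a < 1) :
    Tendsto (fun n : ℕ => a ^ n) atTop (𝓝 0) := by
  obtain ⟨r, hr, hr1⟩ := ENNReal.lt_iff_exists_nnreal_btwn.mp h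
  have hgelfand := spectrum.pow_nnnorm_pow_one_div_tendsto_nhds_spectralRadius a
  have hbound : ∀ᶠ n : ℕ in atTop, ‖a ^ n‖ ≤ (r : ℝ) ^ n := by
    filter_upwards [hgelfand.eventually_lt_const hr, eventually_gt_atTop 0] with n hn hn0
    rw [← ENNReal.coe_rpow_of_nonneg _ (by positivity), ENNReal.coe_lt_coe, one_div,
      NNReal.rpow_inv_lt_iff (by positivity), NNReal.rpow_natCast] at hn
    exact_mod_cast hn.le
  exact squeeze_zero_norm' hbound
    (tendsto_pow_atTop_nhds_zero_of_lt_one r.2 (by exact_mod_cast hr1))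

theorem norm_lt_one_of_isRoot_of_specRad_lt_one {N : ℕ} {T : Matrix (Fin N) (Fin N) ℝ}
    (h : specRad N T < 1) {z : ℂ} (hz : (T.map Complex.ofReal).charpoly.IsRoot z) :
    ‖z‖ < 1 := by
  have hroots : {z | (T.map Complex.ofReal).charpoly.IsRoot z}.Finite :=
    finite_setOfPred_isRoot (charpoly_monic _).ne_zero
  have hbdd : BddAbove {r : ℝ | ∃ z : ℂ, (T.map Complex.ofReal).charpoly.IsRoot z ∧ r = ‖z‖} := by
    refine (hroots.image (fun z : ℂ => ‖z‖)).bddAbove.mono ?_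
    rintro _ ⟨z, hz, rfl⟩
    exact ⟨z, hz, rfl⟩
  exact (le_csSup hbdd ⟨z, hz, rfl⟩).trans_lt h

section

attribute [local instance] Matrix.linftyOpNormedRing Matrix.linftyOpNormedAlgebra

theorem tendsto_pow_atTop_nhds_zero_of_specRad_lt_one {N : ℕ} {T : Matrix (Fin N) (Fin N) ℝ}
    (h : specRad N T < 1) : Tendsto (fun k : ℕ => T ^ k) atTop (𝓝 0) := by
  rcases isEmpty_or_nonempty (Fin N) with hN | hN
  · exact tendsto_const_nhds.congr fun k => Subsingleton.elim _ _
  have hspec : spectralRadius ℂ (T.map Complex.ofReal) < 1 := by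
    refine spectrum.spectralRadius_lt_of_forall_lt _ fun z hz => ?_
    rw [mem_spectrum_iff_isRoot_charpoly] at hz
    exact_mod_cast norm_lt_one_of_isRoot_of_specRad_lt_one h hz
  have hre : Continuous fun M : Matrix (Fin N) (Fin N) ℂ => M.map Complex.re :=
    continuous_id.matrix_map Complex.continuous_re
  have hpow (k : ℕ) : ((T.map Complex.ofReal) ^ k).map Complex.re = T ^ k := by
    rw [show T.map Complex.ofReal = Complex.ofRealHom.mapMatrix T from rfl, ← map_pow]
    ext
    simp
  simpa [Function.comp_def, hpow] using
    (hre.tendsto 0).comp (tendsto_pow_atTop_nhds_zero_of_spectralRadius_lt_one hspec)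

end

section NonnegMatrix

variable {n : Type*} [Fintype n] {T : Matrix n n ℝ}

theorem mulVec_mono_of_nonneg (hT : ∀ j k, 0 ≤ T j k) {x y : n → ℝ} (h : x ≤ y) :
    T *ᵥ x ≤ T *ᵥ y := fun j =>
  Finset.sum_le_sum fun k _ => mul_le_mul_of_nonneg_left (h k) (hT j k)

variable [DecidableEq n]

theorem tendsto_pow_mulVec (hpow : Tendsto (fun k : ℕ => T ^ k) atTop (𝓝 0)) (x : n → ℝ) :
    Tendsto (fun k : ℕ => T ^ k *ᵥ x) atTop (𝓝 0) := by
  simpa [Function.comp_def] using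
    ((continuous_id.matrix_mulVec continuous_const).tendsto 0).comp hpow

theorem det_one_sub_ne_zero_of_tendsto_pow (hpow : Tendsto (fun k : ℕ => T ^ k) atTop (𝓝 0)) :
    (1 - T).det ≠ 0 := by
  intro hdet
  obtain ⟨v, hv0, hv⟩ := exists_mulVec_eq_zero_iff.mpr hdet
  have hfix : T *ᵥ v = v := by
    rw [sub_mulVec, one_mulVec, sub_eq_zero] at hv
    exact hv.symm
  have hpow_fix (k : ℕ) : T ^ k *ᵥ v = v := by
    induction k with
    | zero => simp
    | succ k ih => rw [pow_succ, ← mulVec_mulVec, hfix, ih]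
  exact hv0 (by simpa [hpow_fix] using tendsto_pow_mulVec hpow v)

theorem one_sub_mulVec_inv_one_sub_mulVec (hpow : Tendsto (fun k : ℕ => T ^ k) atTop (𝓝 0))
    (v : n → ℝ) : (1 - T) *ᵥ ((1 - T)⁻¹ *ᵥ v) = v := by
  rw [mulVec_mulVec, mul_nonsing_inv _ (isUnit_iff_ne_zero.mpr
    (det_one_sub_ne_zero_of_tendsto_pow hpow)), one_mulVec]

variable (hT : ∀ j k, 0 ≤ T j k) (hpow : Tendsto (fun k : ℕ => T ^ k) atTop (𝓝 0))
include hT hpow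

theorem nonneg_of_one_sub_mulVec_nonneg {x : n → ℝ} (hx : 0 ≤ (1 - T) *ᵥ x) : 0 ≤ x := by
  have hTx : T *ᵥ x ≤ x := by simpa [sub_mulVec] using hx
  have hle (k : ℕ) : T ^ k *ᵥ x ≤ x := by
    induction k with
    | zero => simp
    | succ k ih =>
      rw [pow_succ', ← mulVec_mulVec]
      exact (mulVec_mono_of_nonneg hT ih).trans hTx
  exact le_of_tendsto' (tendsto_pow_mulVec hpow x) hle

theorem inv_one_sub_mulVec_nonneg {v : n → ℝ} (hv : 0 ≤ v) : 0 ≤ (1 - T)⁻¹ *ᵥ v :=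
  nonneg_of_one_sub_mulVec_nonneg hT hpow (by rwa [one_sub_mulVec_inv_one_sub_mulVec hpow])

theorem inv_one_sub_mulVec_le_one {v : n → ℝ} (hv : T *ᵥ 1 + v ≤ 1) : (1 - T)⁻¹ *ᵥ v ≤ 1 := by
  refine sub_nonneg.mp (nonneg_of_one_sub_mulVec_nonneg hT hpow ?_)
  rw [mulVec_sub, one_sub_mulVec_inv_one_sub_mulVec hpow, sub_mulVec, one_mulVec, sub_sub,
    sub_nonneg]
  exact hv

end NonnegMatrix

theorem one_div_card_mul_sum_mem_Icc {ι : Type*} (s : Finset ι) {f : ι → ℝ}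
    (hf : ∀ n ∈ s, f n ∈ Set.Icc 0 1) : 1 / (#s : ℝ) * ∑ n ∈ s, f n ∈ Set.Icc 0 1 := by
  have hsum : ∑ n ∈ s, f n ≤ #s := by
    simpa using Finset.sum_le_card_nsmul s f 1 fun n hn => (hf n hn).2
  rw [one_div_mul_eq_div]
  exact ⟨div_nonneg (Finset.sum_nonneg fun n hn => (hf n hn).1) (by positivity),
    div_le_one_of_le₀ hsum (by positivity)⟩

section Model

variable {N : ℕ} {L : Fin N → Finset (Fin N)} {lam mu : Fin N → ℝ}

section

variable (hlam : ∀ n, 0 ≤ lam n) (hmu : ∀ n, 0 ≤ mu n)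
include hlam hmu

theorem sum_lam_add_mu_nonneg (s : Finset (Fin N)) : 0 ≤ ∑ l ∈ s, (lam l + mu l) :=
  sum_nonneg fun l _ => add_nonneg (hlam l) (hmu l)

theorem propA_nonneg (j k : Fin N) : 0 ≤ propA N L lam mu j k := by
  rw [propA, of_apply]
  split_ifs
  · exact div_nonneg (hmu k) (sum_lam_add_mu_nonneg hlam hmu _)
  · rfl

theorem bvec_nonneg (i : Fin N) : 0 ≤ bvec N L lam mu i := fun j => by
  rw [bvec]
  split_ifs
  · exact div_nonneg (hlam i) (sum_lam_add_mu_nonneg hlam hmu _)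
  · rfl

theorem propA_mulVec_one_add_bvec_le_one (i : Fin N) :
    propA N L lam mu *ᵥ 1 + bvec N L lam mu i ≤ 1 := fun j => by
  set S := ∑ l ∈ L j, (lam l + mu l)
  have hS : 0 ≤ S := sum_lam_add_mu_nonneg hlam hmu _
  have hA : (propA N L lam mu *ᵥ 1) j = (∑ k ∈ L j, mu k) / S := by
    simp [mulVec, dotProduct, propA, Finset.sum_ite_mem, Finset.sum_div, S]
  have hb : bvec N L lam mu i j ≤ (∑ k ∈ L j, lam k) / S := by
    rw [bvec]
    split_ifs with hi
    · gcongr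
      exact single_le_sum (fun l _ => hlam l) hi
    · exact div_nonneg (sum_nonneg fun l _ => hlam l) hS
  calc (propA N L lam mu *ᵥ 1 + bvec N L lam mu i) j
      ≤ (∑ k ∈ L j, mu k) / S + (∑ k ∈ L j, lam k) / S := by
        rw [Pi.add_apply, hA]
        gcongr
    _ = S / S := by
        rw [← add_div, ← sum_add_distrib]
        exact congrArg (· / S) (sum_congr rfl fun l _ => add_comm _ _)
    _ ≤ 1 := div_self_le_one S

omit hlam hmu in
theorem Cmat_mulVec_add_dvec_apply_of_ne {x : Fin N → ℝ} {i n : Fin N} (hn : n ≠ i) :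
    (Cmat N lam mu *ᵥ x + dvec N lam mu i) n = mu n / (lam n + mu n) * x n := by
  simp [Cmat, dvec, mulVec_diagonal, hn]

theorem Cmat_mulVec_add_dvec_apply_mem_Icc {x : Fin N → ℝ} (hx₀ : 0 ≤ x) (hx₁ : x ≤ 1)
    {i n : Fin N} (hn : n ≠ i) : (Cmat N lam mu *ᵥ x + dvec N lam mu i) n ∈ Set.Icc 0 1 := by
  have hsum : 0 ≤ lam n + mu n := add_nonneg (hlam n) (hmu n)
  rw [Cmat_mulVec_add_dvec_apply_of_ne hn]
  exact ⟨mul_nonneg (div_nonneg (hmu n) hsum) (hx₀ n),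
    mul_le_one₀ (div_le_one_of_le₀ (le_add_of_nonneg_left (hlam n)) hsum) (hx₀ n) (hx₁ n)⟩

end

end Model

theorem stmt13_general (N : ℕ) (L : Fin N → Finset (Fin N))
    (lam mu : Fin N → ℝ)
    (hlam : ∀ n, 0 ≤ lam n) (hmu : ∀ n, 0 ≤ mu n)
    (hrho : specRad N (propA N L lam mu) < 1) (i : Fin N) :
    0 ≤ (1 / ((N : ℝ) - 1)) *
          ∑ n ∈ Finset.univ.filter (fun n => n ≠ i),
            ((Cmat N lam mu).mulVec
                ((1 - propA N L lam mu)⁻¹.mulVec (bvec N L lam mu i)) +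
              dvec N lam mu i) n ∧
    (1 / ((N : ℝ) - 1)) *
          ∑ n ∈ Finset.univ.filter (fun n => n ≠ i),
            ((Cmat N lam mu).mulVec
                ((1 - propA N L lam mu)⁻¹.mulVec (bvec N L lam mu i)) +
              dvec N lam mu i) n ≤ 1 := by
  have hA := propA_nonneg (L := L) hlam hmu
  have hpow := tendsto_pow_atTop_nhds_zero_of_specRad_lt_one hrho
  have hx₀ := inv_one_sub_mulVec_nonneg hA hpow (bvec_nonneg (L := L) hlam hmu i)
  have hx₁ := inv_one_sub_mulVec_le_one hA hpow (propA_mulVec_one_add_bvec_le_one hlam hmu i)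
  have hcard : (N : ℝ) - 1 = #(univ.filter fun n => n ≠ i) := by
    rw [filter_ne', card_erase_of_mem (mem_univ i), card_univ, Fintype.card_fin,
      Nat.cast_sub i.pos, Nat.cast_one]
  rw [hcard]
  exact one_div_card_mul_sum_mem_Icc _ fun n hn =>
    Cmat_mulVec_add_dvec_apply_mem_Icc hlam hmu hx₀ hx₁ (mem_filter.mp hn).2

/-- if `N ≥ 2` and `ρ(A) < 1`, the influence score
`Ψ_i = (1/(N-1)) Σ_{n ≠ i} (q_i)_n` of every user `i` satisfies
`0 ≤ Ψ_i ≤ 1`. -/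
theorem stmt13 (N : ℕ) (hN : 2 ≤ N) (L : Fin N → Finset (Fin N))
    (hL : ∀ j, (L j).Nonempty) (lam mu : Fin N → ℝ)
    (hlam : ∀ n, 0 ≤ lam n) (hmu : ∀ n, 0 ≤ mu n)
    (hpos : ∀ n, 0 < lam n + mu n)
    (hrho : specRad N (propA N L lam mu) < 1) (i : Fin N) :
    0 ≤ (1 / ((N : ℝ) - 1)) *
          ∑ n ∈ Finset.univ.filter (fun n => n ≠ i),
            ((Cmat N lam mu).mulVec
                ((1 - propA N L lam mu)⁻¹.mulVec (bvec N L lam mu i)) +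
              dvec N lam mu i) n ∧
    (1 / ((N : ℝ) - 1)) *
          ∑ n ∈ Finset.univ.filter (fun n => n ≠ i),
            ((Cmat N lam mu).mulVec
                ((1 - propA N L lam mu)⁻¹.mulVec (bvec N L lam mu i)) +
              dvec N lam mu i) n ≤ 1 :=
  stmt13_general N L lam mu hlam hmu hrho i
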